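/- arXiv:2501.00612 — 2 statements merged into one kernel-verified Lean document; each statement's English description precedes it below -/
import Mathlib

section
/- Correcting misinformation costs at least as much as correcting ignorance when the receiver's kernel size is at most 1/2: for all p_s, p_r with 0 < p_s < p_r ≤ 1/2 and p_r + p_s < 1, the misinformation cost Λ(p_s, 1 - p_r - p_s) is greater than or equal to the ignorance cost Λ(p_s, p_r - p_s), with strict inequality when p_r < 1/2. -/
/-- The logical semantic entropy `Λ(a,b) = a·log₂((a+b)/a) + b·log₂((a+b)/b)`. -/
noncomputable def lse (a b : ℝ) : ℝ :=
  a * Real.logb 2 ((a + b) / a) + b * Real.logb 2 ((a + b) / b)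

/-- The binary entropy function `H₂(p) = -p·log₂ p - (1-p)·log₂(1-p)`. -/
noncomputable def binEnt (p : ℝ) : ℝ :=
  -p * Real.logb 2 p - (1 - p) * Real.logb 2 (1 - p)

/-! `Λ(a, ·)` is strictly increasing on `(0, ∞)`, and `p_r - p_s ≤ 1 - p_r - p_s` exactly when
`p_r ≤ 1/2`. -/

open Real Set

lemma lse_eq_negMulLog {a b : ℝ} (ha : 0 < a) (hb : 0 < b) :
    lse a b = (negMulLog a + negMulLog b - negMulLog (a + b)) / log 2 := by
  have hab : 0 < a + b := ha.trans (lt_add_of_pos_right a hb)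
  simp only [lse, logb, negMulLog, log_div hab.ne' ha.ne', log_div hab.ne' hb.ne']
  ring

/-- The derivative in `b` is `log (a + b) - log b > 0`. -/
lemma strictMonoOn_negMulLog_sub_negMulLog_add {a : ℝ} (ha : 0 < a) :
    StrictMonoOn (fun b => negMulLog b - negMulLog (a + b)) (Ioi 0) := by
  refine strictMonoOn_of_hasDerivWithinAt_pos (convex_Ioi 0)
    (f' := fun b => log (a + b) - log b) ?_ (fun b hb => ?_) (fun b hb => ?_)
  · exact (continuous_negMulLog.sub
      (continuous_negMulLog.comp (continuous_const_add a))).continuousOn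
  · rw [interior_Ioi] at hb ⊢
    have hab : a + b ≠ 0 := (add_pos ha hb).ne'
    have hderiv := (hasDerivAt_negMulLog (ne_of_gt hb)).sub
      ((hasDerivAt_negMulLog hab).comp_const_add a b)
    exact (hderiv.congr_deriv (by ring)).hasDerivWithinAt
  · rw [interior_Ioi] at hb
    exact sub_pos.mpr (log_lt_log hb (lt_add_of_pos_left b ha))

lemma lse_strictMonoOn {a : ℝ} (ha : 0 < a) : StrictMonoOn (lse a) (Ioi 0) := by
  intro b hb c hc hbc
  rw [lse_eq_negMulLog ha hb, lse_eq_negMulLog ha hc]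
  have h := strictMonoOn_negMulLog_sub_negMulLog_add ha hb hc hbc
  exact div_lt_div_of_pos_right (by linarith) (log_pos one_lt_two)

theorem lse_misinformation_ge_ignorance_general (ps pr : ℝ) (hs : 0 < ps) (hsr : ps < pr)
    (hr : pr ≤ 1 / 2) :
    lse ps (pr - ps) ≤ lse ps (1 - pr - ps) ∧
      (pr < 1 / 2 → lse ps (pr - ps) < lse ps (1 - pr - ps)) := by
  have hign : pr - ps ∈ Ioi 0 := sub_pos.mpr hsr
  have hle : pr - ps ≤ 1 - pr - ps := by linarith
  have hmis : 1 - pr - ps ∈ Ioi 0 := lt_of_lt_of_le hign hle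
  exact ⟨(lse_strictMonoOn hs).monotoneOn hign hmis hle,
    fun hlt => lse_strictMonoOn hs hign hmis (by linarith)⟩

/-- correcting misinformation costs at least as much as correcting
ignorance when `p_r ≤ 1/2`, strictly more when `p_r < 1/2`. -/
theorem lse_misinformation_ge_ignorance (ps pr : ℝ) (hs : 0 < ps) (hsr : ps < pr)
    (hr : pr ≤ 1 / 2) (hsum : pr + ps < 1) :
    lse ps (pr - ps) ≤ lse ps (1 - pr - ps) ∧
      (pr < 1 / 2 → lse ps (pr - ps) < lse ps (1 - pr - ps)) :=
  lse_misinformation_ge_ignorance_general ps pr hs hsr hr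
end

section
/- Two propositional formulas over m variables are logically equivalent (each derivable from the other in the Hilbert-style proof system) if and only if they have the same kernel. -/
/-- Propositional formulas over `m` variables `X₁, …, X_m`. -/
inductive PropForm (m : ℕ) : Type
  | var : Fin m → PropForm m
  | not : PropForm m → PropForm m
  | and : PropForm m → PropForm m → PropForm m
  | or  : PropForm m → PropForm m → PropForm m
  | imp : PropForm m → PropForm m → PropForm m

namespace PropForm

/-- Truth-table evaluation of a formula under a valuation `v : Fin m → Bool`. -/
def eval {m : ℕ} (v : Fin m → Bool) : PropForm m → Bool
  | var i => v i
  | not s => !(eval v s)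
  | and s t => eval v s && eval v t
  | or s t => eval v s || eval v t
  | imp s t => !(eval v s) || eval v t

/-- The kernel `⟦s⟧` of a formula `s`: the set of valuations that satisfy it. -/
def kernel {m : ℕ} (s : PropForm m) : Set (Fin m → Bool) :=
  {v | eval v s = true}

/-- A standard complete set of axiom schemes for classical propositional logic
(Hilbert style), covering implication, negation, conjunction and disjunction. -/
inductive Ax {m : ℕ} : PropForm m → Prop
  | ax1 (s t : PropForm m) : Ax (s.imp (t.imp s))
  | ax2 (s t u : PropForm m) : Ax ((s.imp (t.imp u)).imp ((s.imp t).imp (s.imp u)))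
  | ax3 (s t : PropForm m) : Ax ((s.not.imp t.not).imp (t.imp s))
  | ax4 (s t : PropForm m) : Ax ((s.and t).imp s)
  | ax5 (s t : PropForm m) : Ax ((s.and t).imp t)
  | ax6 (s t : PropForm m) : Ax (s.imp (t.imp (s.and t)))
  | ax7 (s t : PropForm m) : Ax (s.imp (s.or t))
  | ax8 (s t : PropForm m) : Ax (t.imp (s.or t))
  | ax9 (s t u : PropForm m) : Ax ((s.imp u).imp ((t.imp u).imp ((s.or t).imp u)))

/-- Hilbert-style derivability `h ⊢ t`: `t` is derivable from the hypothesis `h`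
using the axiom schemes and modus ponens as the only inference rule. -/
inductive Derives {m : ℕ} (h : PropForm m) : PropForm m → Prop
  | ax {t : PropForm m} : Ax t → Derives h t
  | hyp : Derives h h
  | mp {s t : PropForm m} : Derives h (s.imp t) → Derives h s → Derives h t

end PropForm

/-!
Derivations preserve truth under every valuation, which gives one direction. Conversely, if the
kernels agree then `s ⟹ t` is a tautology, and tautologies are derivable by Kalmár's argument:
for a valuation `v`, the `v`-literal of every formula (the formula or its negation, whichever `v`
makes true) is derivable from the `v`-literals of the variables, and these hypotheses are then
discharged one variable at a time by splitting on `Xᵢ` versus `¬Xᵢ`.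
-/

namespace PropForm

variable {m : ℕ}

inductive Derivable (Γ : Set (PropForm m)) : PropForm m → Prop
  | ax {t : PropForm m} : Ax t → Derivable Γ t
  | hyp {t : PropForm m} : t ∈ Γ → Derivable Γ t
  | mp {s t : PropForm m} : Derivable Γ (s.imp t) → Derivable Γ s → Derivable Γ t

theorem derives_iff_derivable_singleton {h t : PropForm m} :
    Derives h t ↔ Derivable {h} t := by
  constructor
  · intro d
    induction d with
    | ax a => exact .ax a
    | hyp => exact .hyp rfl
    | mp _ _ ih₁ ih₂ => exact .mp ih₁ ih₂
  · intro d
    induction d with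
    | ax a => exact .ax a
    | hyp ht => rw [ht]; exact .hyp
    | mp _ _ ih₁ ih₂ => exact .mp ih₁ ih₂

theorem Ax.eval_eq_true {t : PropForm m} (h : Ax t) (v : Fin m → Bool) : eval v t = true := by
  cases h <;> simp only [eval] <;> grind

theorem Derivable.eval_eq_true {Γ : Set (PropForm m)} {t : PropForm m} (d : Derivable Γ t)
    {v : Fin m → Bool} (hΓ : ∀ p ∈ Γ, eval v p = true) : eval v t = true := by
  induction d with
  | ax a => exact a.eval_eq_true v
  | hyp ht => exact hΓ _ ht
  | mp _ _ ih₁ ih₂ => simpa [eval, ih₂] using ih₁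

def lit (v : Fin m → Bool) (s : PropForm m) : PropForm m :=
  if eval v s then s else s.not

namespace Derivable

variable {Γ Δ : Set (PropForm m)} {s t : PropForm m} {v : Fin m → Bool}

theorem mono (h : Γ ⊆ Δ) (d : Derivable Γ t) : Derivable Δ t := by
  induction d with
  | ax a => exact .ax a
  | hyp ht => exact .hyp (h ht)
  | mp _ _ ih₁ ih₂ => exact .mp ih₁ ih₂

theorem weaken (d : Derivable Γ t) : Derivable (insert s Γ) t :=
  d.mono (Set.subset_insert s Γ)

theorem hyp_insert : Derivable (insert s Γ) s :=
  .hyp (Set.mem_insert s Γ)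

theorem imp_self (s : PropForm m) : Derivable Γ (s.imp s) :=
  .mp (.mp (.ax (.ax2 s (s.imp s) s)) (.ax (.ax1 s (s.imp s)))) (.ax (.ax1 s s))

theorem imp_intro (d : Derivable (insert s Γ) t) : Derivable Γ (s.imp t) := by
  induction d with
  | ax a => exact .mp (.ax (.ax1 _ s)) (.ax a)
  | hyp ht =>
    rcases ht with rfl | ht
    · exact imp_self _
    · exact .mp (.ax (.ax1 _ s)) (.hyp ht)
  | mp _ _ ih₁ ih₂ => exact .mp (.mp (.ax (.ax2 s _ _)) ih₁) ih₂

theorem absurd (hs : Derivable Γ s) (hns : Derivable Γ s.not) : Derivable Γ t :=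
  .mp (.mp (.ax (.ax3 t s)) (.mp (.ax (.ax1 s.not t.not)) hns)) hs

theorem imp_of_not (hns : Derivable Γ s.not) : Derivable Γ (s.imp t) :=
  imp_intro (absurd hyp_insert hns.weaken)

theorem by_contra (ht : Derivable (insert s.not Γ) t) (hnt : Derivable (insert s.not Γ) t.not) :
    Derivable Γ s :=
  .mp (.mp (.ax (.ax3 s (s.imp s))) (absurd ht hnt).imp_intro) (imp_self s)

theorem of_not_not (h : Derivable Γ s.not.not) : Derivable Γ s :=
  by_contra hyp_insert h.weaken

theorem not_intro (ht : Derivable (insert s Γ) t) (hnt : Derivable (insert s Γ) t.not) :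
    Derivable Γ s.not :=
  by_contra (.mp ht.imp_intro.weaken (of_not_not hyp_insert))
    (.mp hnt.imp_intro.weaken (of_not_not hyp_insert))

theorem mt (hst : Derivable Γ (s.imp t)) (hnt : Derivable Γ t.not) : Derivable Γ s.not :=
  not_intro (.mp hst.weaken hyp_insert) hnt.weaken

theorem not_not_intro (hs : Derivable Γ s) : Derivable Γ s.not.not :=
  not_intro hs.weaken hyp_insert

theorem by_cases (hpos : Derivable (insert s Γ) t) (hneg : Derivable (insert s.not Γ) t) :
    Derivable Γ t :=
  have hns : Derivable (insert t.not Γ) s.not := mt hpos.imp_intro.weaken hyp_insert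
  by_contra (.mp hneg.imp_intro.weaken hns) hyp_insert

theorem lit_not (hs : Derivable Γ (lit v s)) : Derivable Γ (lit v s.not) := by
  cases h : eval v s <;> simp only [lit, eval, h, Bool.not_true, Bool.not_false] at hs ⊢
  · exact hs
  · exact not_not_intro hs

theorem lit_and (hs : Derivable Γ (lit v s)) (ht : Derivable Γ (lit v t)) :
    Derivable Γ (lit v (s.and t)) := by
  cases hvs : eval v s <;> cases hvt : eval v t <;>
    simp only [lit, eval, hvs, hvt, Bool.true_and, Bool.false_and, Bool.and_false] at hs ht ⊢
  · exact mt (.ax (.ax4 s t)) hs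
  · exact mt (.ax (.ax4 s t)) hs
  · exact mt (.ax (.ax5 s t)) ht
  · exact .mp (.mp (.ax (.ax6 s t)) hs) ht

theorem lit_or (hs : Derivable Γ (lit v s)) (ht : Derivable Γ (lit v t)) :
    Derivable Γ (lit v (s.or t)) := by
  cases hvs : eval v s <;> cases hvt : eval v t <;>
    simp only [lit, eval, hvs, hvt, Bool.true_or, Bool.false_or, Bool.or_true] at hs ht ⊢
  · exact mt (.mp (.mp (.ax (.ax9 s t s)) (imp_self s)) (imp_of_not ht)) hs
  · exact .mp (.ax (.ax8 s t)) ht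
  · exact .mp (.ax (.ax7 s t)) hs
  · exact .mp (.ax (.ax7 s t)) hs

theorem lit_imp (hs : Derivable Γ (lit v s)) (ht : Derivable Γ (lit v t)) :
    Derivable Γ (lit v (s.imp t)) := by
  cases hvs : eval v s <;> cases hvt : eval v t <;>
    simp only [lit, eval, hvs, hvt, Bool.not_true, Bool.not_false, Bool.true_or, Bool.false_or,
      Bool.or_true] at hs ht ⊢
  · exact imp_of_not hs
  · exact imp_of_not hs
  · exact not_intro (.mp hyp_insert hs.weaken) ht.weaken
  · exact .mp (.ax (.ax1 t s)) ht

theorem lit_of_lit_var (hvar : ∀ i, Derivable Γ (lit v (var i))) :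
    ∀ s : PropForm m, Derivable Γ (lit v s)
  | var i => hvar i
  | not s => lit_not (lit_of_lit_var hvar s)
  | and s t => lit_and (lit_of_lit_var hvar s) (lit_of_lit_var hvar t)
  | or s t => lit_or (lit_of_lit_var hvar s) (lit_of_lit_var hvar t)
  | imp s t => lit_imp (lit_of_lit_var hvar s) (lit_of_lit_var hvar t)

end Derivable

def litSet (v : Fin m → Bool) (S : Finset (Fin m)) : Set (PropForm m) :=
  (fun i => lit v (var i)) '' S

theorem lit_var_update_of_ne {v : Fin m → Bool} {i j : Fin m} (b : Bool) (h : j ≠ i) :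
    lit (Function.update v i b) (var j) = lit v (var j) := by
  rw [lit, lit, eval, eval, Function.update_of_ne h]

theorem litSet_update_insert (v : Fin m → Bool) {i : Fin m} {S : Finset (Fin m)} (hi : i ∉ S)
    (b : Bool) :
    litSet (Function.update v i b) (insert i S) =
      insert (lit (Function.update v i b) (var i)) (litSet v S) := by
  rw [litSet, Finset.coe_insert, Set.image_insert_eq, litSet]
  congr 1
  refine Set.image_congr fun j hj => lit_var_update_of_ne b ?_
  rintro rfl
  exact hi hj

theorem derivable_of_forall_litSet {t : PropForm m} (S : Finset (Fin m))
    (h : ∀ v, Derivable (litSet v S) t) : Derivable ∅ t := by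
  induction S using Finset.induction_on with
  | empty => simpa [litSet] using h (fun _ => false)
  | insert i S hi ih =>
    refine ih fun v => Derivable.by_cases (s := var i) ?_ ?_
    · simpa [litSet_update_insert v hi, lit, eval] using h (Function.update v i true)
    · simpa [litSet_update_insert v hi, lit, eval] using h (Function.update v i false)

theorem derivable_of_forall_eval {Γ : Set (PropForm m)} {t : PropForm m}
    (ht : ∀ v, eval v t = true) : Derivable Γ t := by
  refine (derivable_of_forall_litSet Finset.univ fun v => ?_).mono (Set.empty_subset Γ)
  have hvar (i : Fin m) : Derivable (litSet v Finset.univ) (lit v (var i)) :=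
    .hyp ⟨i, Finset.mem_coe.2 (Finset.mem_univ i), rfl⟩
  simpa [lit, ht v] using Derivable.lit_of_lit_var hvar t

theorem derives_iff_kernel_subset {s t : PropForm m} : Derives s t ↔ kernel s ⊆ kernel t := by
  rw [derives_iff_derivable_singleton]
  refine ⟨fun d v hs => d.eval_eq_true fun p hp => hp ▸ hs, fun hst => ?_⟩
  have htaut : ∀ v, eval v (s.imp t) = true := fun v => by
    simpa [eval, kernel, or_iff_not_imp_left] using @hst v
  exact .mp (derivable_of_forall_eval htaut) (.hyp rfl)

end PropForm

/-- two formulas are logically equivalent (inter-derivable) iff they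
have the same kernel. -/
theorem equivalent_iff_kernel_eq {m : ℕ} (s t : PropForm m) :
    (PropForm.Derives s t ∧ PropForm.Derives t s) ↔
      PropForm.kernel s = PropForm.kernel t := by
  rw [PropForm.derives_iff_kernel_subset, PropForm.derives_iff_kernel_subset,
    Set.Subset.antisymm_iff]
end
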